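/- Let E be a real Banach space. Let Q⁰ : E → ℝ be twice continuously differentiable, Q¹_X, Q¹_Y : E → ℝ continuously differentiable, Q²_X, Q²_Y : E → ℝ functions, X_X, X_Y, Y_X, Y_Y : E → E vector fields with X_X, X_Y continuously differentiable, and ξ₁, ξ₂ : E → E vector fields with ξ₁ continuously differentiable. Assume the gauge transformation rules: Q¹_Y − Q¹_X = ξ₁·Q⁰, Q²_Y − Q²_X = 2 ξ₁·Q¹_X + ξ₂·Q⁰ + ξ₁·(ξ₁·Q⁰), X_Y − X_X = ξ₁, and Y_Y − Y_X = ξ₂ + [ξ₁, X_X] (all pointwise). Then the second-order gauge-invariant variable ⁽²⁾𝒬 := Q² − 2 X·Q¹ − Y·Q⁰ + X·(X·Q⁰) is independent of the gauge: Q²_Y − 2 X_Y·Q¹_Y − Y_Y·Q⁰ + X_Y·(X_Y·Q⁰) = Q²_X − 2 X_X·Q¹_X − Y_X·Q⁰ + X_X·(X_X·Q⁰) pointwise on E. -/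

import Mathlib

/-!
Substituting the transformation rules, every term of `⁽²⁾𝒬_Y − ⁽²⁾𝒬_X` cancels except
`ξ₁·(X_X·Q⁰) − X_X·(ξ₁·Q⁰) − [ξ₁, X_X]·Q⁰`, which vanishes because on `C²` functions the Lie
bracket acts as the commutator of directional derivatives (symmetry of the second derivative).
-/

/-- Directional (Lie) derivative of a scalar function `f` along a vector field `V`:
`(V·f)(x) = (fderiv ℝ f x)(V x)`. -/
noncomputable def dirDeriv {E : Type*} [NormedAddCommGroup E] [NormedSpace ℝ E]
    (V : E → E) (f : E → ℝ) : E → ℝ :=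
  fun x => (fderiv ℝ f x) (V x)

/-- Lie bracket of vector fields on a Banach space:
`[V,W](x) = (fderiv ℝ W x)(V x) − (fderiv ℝ V x)(W x)`. -/
noncomputable def lieBracket {E : Type*} [NormedAddCommGroup E] [NormedSpace ℝ E]
    (V W : E → E) : E → E :=
  fun x => (fderiv ℝ W x) (V x) - (fderiv ℝ V x) (W x)

section dirDeriv

variable {E : Type*} [NormedAddCommGroup E] [NormedSpace ℝ E]
  {f g : E → ℝ} {V W : E → E} {x : E}

lemma dirDeriv_add_left (V W : E → E) (f : E → ℝ) :
    dirDeriv (V + W) f = dirDeriv V f + dirDeriv W f :=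
  funext fun x => map_add (fderiv ℝ f x) (V x) (W x)

lemma dirDeriv_add_right (V : E → E) (hf : DifferentiableAt ℝ f x)
    (hg : DifferentiableAt ℝ g x) :
    dirDeriv V (f + g) x = dirDeriv V f x + dirDeriv V g x := by
  simp only [dirDeriv, fderiv_add hf hg, add_apply]

lemma hasFDerivAt_dirDeriv (hf : DifferentiableAt ℝ (fderiv ℝ f) x)
    (hV : DifferentiableAt ℝ V x) :
    HasFDerivAt (dirDeriv V f)
      ((fderiv ℝ f x).comp (fderiv ℝ V x) + (fderiv ℝ (fderiv ℝ f) x).flip (V x)) x :=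
  hf.hasFDerivAt.clm_apply hV.hasFDerivAt

lemma differentiableAt_dirDeriv (hf : DifferentiableAt ℝ (fderiv ℝ f) x)
    (hV : DifferentiableAt ℝ V x) : DifferentiableAt ℝ (dirDeriv V f) x :=
  (hasFDerivAt_dirDeriv hf hV).differentiableAt

lemma fderiv_dirDeriv_apply (hf : DifferentiableAt ℝ (fderiv ℝ f) x)
    (hV : DifferentiableAt ℝ V x) (v : E) :
    fderiv ℝ (dirDeriv V f) x v
      = fderiv ℝ f x (fderiv ℝ V x v) + fderiv ℝ (fderiv ℝ f) x v (V x) := by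
  rw [(hasFDerivAt_dirDeriv hf hV).fderiv]
  rfl

lemma dirDeriv_lieBracket (hf : ContDiffAt ℝ 2 f x) (hV : DifferentiableAt ℝ V x)
    (hW : DifferentiableAt ℝ W x) :
    dirDeriv (lieBracket V W) f x = dirDeriv V (dirDeriv W f) x - dirDeriv W (dirDeriv V f) x := by
  have hf' : DifferentiableAt ℝ (fderiv ℝ f) x :=
    (hf.fderiv_right (m := 1) le_rfl).differentiableAt one_ne_zero
  have hsymm := hf.isSymmSndFDerivAt (by simp) (V x) (W x)
  simp only [dirDeriv, lieBracket, fderiv_dirDeriv_apply hf' hV, fderiv_dirDeriv_apply hf' hW,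
    map_sub]
  linarith

end dirDeriv

theorem second_order_gauge_invariant_variable_general
    {E : Type*} [NormedAddCommGroup E] [NormedSpace ℝ E]
    (Q0 : E → ℝ) (hQ0 : ContDiff ℝ 2 Q0)
    (Q1X Q1Y : E → ℝ) (hQ1X : ContDiff ℝ 1 Q1X)
    (Q2X Q2Y : E → ℝ)
    (XX XY YX YY : E → E) (hXX : ContDiff ℝ 1 XX)
    (ξ₁ ξ₂ : E → E) (hξ₁ : ContDiff ℝ 1 ξ₁)
    (hQ1rule : ∀ x, Q1Y x - Q1X x = dirDeriv ξ₁ Q0 x)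
    (hQ2rule : ∀ x, Q2Y x - Q2X x
      = 2 * dirDeriv ξ₁ Q1X x + dirDeriv ξ₂ Q0 x + dirDeriv ξ₁ (dirDeriv ξ₁ Q0) x)
    (hXrule : ∀ x, XY x - XX x = ξ₁ x)
    (hYrule : ∀ x, YY x - YX x = ξ₂ x + lieBracket ξ₁ XX x) :
    ∀ x, Q2Y x - 2 * dirDeriv XY Q1Y x - dirDeriv YY Q0 x + dirDeriv XY (dirDeriv XY Q0) x
      = Q2X x - 2 * dirDeriv XX Q1X x - dirDeriv YX Q0 x
          + dirDeriv XX (dirDeriv XX Q0) x := by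
  intro x
  obtain rfl : XY = XX + ξ₁ := funext fun y => (add_eq_of_eq_sub' (hXrule y).symm).symm
  obtain rfl : Q1Y = Q1X + dirDeriv ξ₁ Q0 :=
    funext fun y => (add_eq_of_eq_sub' (hQ1rule y).symm).symm
  have dξ₁ : DifferentiableAt ℝ ξ₁ x := hξ₁.differentiable one_ne_zero x
  have dXX : DifferentiableAt ℝ XX x := hXX.differentiable one_ne_zero x
  have dQ0 : DifferentiableAt ℝ (fderiv ℝ Q0) x :=
    (hQ0.fderiv_right (m := 1) le_rfl).differentiable one_ne_zero x
  have dξ₁Q0 := differentiableAt_dirDeriv dQ0 dξ₁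
  have dXXQ0 := differentiableAt_dirDeriv dQ0 dXX
  have dQ1X : DifferentiableAt ℝ Q1X x := hQ1X.differentiable one_ne_zero x
  have expand_XQ1 : dirDeriv (XX + ξ₁) (Q1X + dirDeriv ξ₁ Q0) x
      = dirDeriv XX Q1X x + dirDeriv XX (dirDeriv ξ₁ Q0) x
        + (dirDeriv ξ₁ Q1X x + dirDeriv ξ₁ (dirDeriv ξ₁ Q0) x) := by
    rw [dirDeriv_add_left, Pi.add_apply, dirDeriv_add_right _ dQ1X dξ₁Q0,
      dirDeriv_add_right _ dQ1X dξ₁Q0]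
  have expand_XXQ0 : dirDeriv (XX + ξ₁) (dirDeriv (XX + ξ₁) Q0) x
      = dirDeriv XX (dirDeriv XX Q0) x + dirDeriv XX (dirDeriv ξ₁ Q0) x
        + (dirDeriv ξ₁ (dirDeriv XX Q0) x + dirDeriv ξ₁ (dirDeriv ξ₁ Q0) x) := by
    rw [dirDeriv_add_left, Pi.add_apply, dirDeriv_add_left, dirDeriv_add_right _ dXXQ0 dξ₁Q0,
      dirDeriv_add_right _ dXXQ0 dξ₁Q0]
  have expand_YQ0 : dirDeriv YY Q0 x
      = dirDeriv YX Q0 x + dirDeriv ξ₂ Q0 x + dirDeriv (lieBracket ξ₁ XX) Q0 x := by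
    simp only [dirDeriv, ← map_add, add_assoc, ← hYrule x, add_sub_cancel]
  have hbracket := dirDeriv_lieBracket hQ0.contDiffAt dξ₁ dXX
  linear_combination hQ2rule x - 2 * expand_XQ1 - expand_YQ0 + expand_XXQ0 - hbracket

/-- Gauge invariance of the second-order variable
`⁽²⁾𝒬 := Q² − 2 X·Q¹ − Y·Q⁰ + X·(X·Q⁰)`, given the first- and second-order gauge
transformation rules for `Q¹`, `Q²`, `X` and `Y` (with `Y_Y − Y_X = ξ₂ + [ξ₁, X_X]`). -/
theorem second_order_gauge_invariant_variable
    {E : Type*} [NormedAddCommGroup E] [NormedSpace ℝ E] [CompleteSpace E]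
    (Q0 : E → ℝ) (hQ0 : ContDiff ℝ 2 Q0)
    (Q1X Q1Y : E → ℝ) (hQ1X : ContDiff ℝ 1 Q1X) (hQ1Y : ContDiff ℝ 1 Q1Y)
    (Q2X Q2Y : E → ℝ)
    (XX XY YX YY : E → E) (hXX : ContDiff ℝ 1 XX) (hXY : ContDiff ℝ 1 XY)
    (ξ₁ ξ₂ : E → E) (hξ₁ : ContDiff ℝ 1 ξ₁)
    (hQ1rule : ∀ x, Q1Y x - Q1X x = dirDeriv ξ₁ Q0 x)
    (hQ2rule : ∀ x, Q2Y x - Q2X x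
      = 2 * dirDeriv ξ₁ Q1X x + dirDeriv ξ₂ Q0 x + dirDeriv ξ₁ (dirDeriv ξ₁ Q0) x)
    (hXrule : ∀ x, XY x - XX x = ξ₁ x)
    (hYrule : ∀ x, YY x - YX x = ξ₂ x + lieBracket ξ₁ XX x) :
    ∀ x, Q2Y x - 2 * dirDeriv XY Q1Y x - dirDeriv YY Q0 x + dirDeriv XY (dirDeriv XY Q0) x
      = Q2X x - 2 * dirDeriv XX Q1X x - dirDeriv YX Q0 x
          + dirDeriv XX (dirDeriv XX Q0) x :=
  second_order_gauge_invariant_variable_general Q0 hQ0 Q1X Q1Y hQ1X Q2X Q2Y XX XY YX YY hXX ξ₁ ξ₂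
    hξ₁ hQ1rule hQ2rule hXrule hYrule
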